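/- Let 𝒪 be an order of conductor 𝔣 in an imaginary quadratic field, and let ℓ be a prime dividing 𝔣. Then the action of C_{ℓ²}(𝒪) = (𝒪/ℓ²𝒪)^× on the set of elements of 𝒪/ℓ²𝒪 of additive order ℓ² has exactly ℓ + 1 orbits: one orbit of size ℓ³(ℓ − 1) and ℓ orbits each of size ℓ(ℓ − 1). -/

import Mathlib

/-!
Since `𝒪_K / ℤ` is torsion-free, `𝒪_K = ℤ ⊕ ℤω` for some `ω`, say with `ω² = a + cω`. Then
`𝒪 = ℤ ⊕ ℤfω` with `(fω)² = f²a + fc·fω`, and because `ℓ ∣ f` this gives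
`𝒪/ℓ²𝒪 ≅ (ℤ/ℓ²)[T]/(T² - bT)` with `b = fc` a non-unit of `ℤ/ℓ²`. Any two non-units of `ℤ/ℓ²`
multiply to zero, so `r + sT` is a unit iff `r` is, and has additive order `ℓ²` iff `r` or `s`
is a unit. A non-unit of order `ℓ²` is `s(r + T)` with `s` a unit and `r` one of the `ℓ`
non-units of `ℤ/ℓ²`, and since `r(r + b) = 0` the orbit of `r + T` is exactly
`{t(r + T) | t ∈ (ℤ/ℓ²)ˣ}`. So the orbits are the units, `ℓ(ℓ - 1)·ℓ²` of them, and `ℓ` orbits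
of size `ℓ(ℓ - 1)`.
-/

/-- The order `ℤ + f·𝒪_K` of conductor `f` in `K`. -/
noncomputable def condOrder (K : Type*) [Field K] (f : ℕ) : Subring K :=
  Subring.closure ((fun y : K => (f : K) * y) '' (integralClosure ℤ K : Set K))

open NumberField Module

section UnitOrbits

variable {M : Type*} [Monoid M]

theorem setOf_exists_units_mul_eq_orbit (x : M) :
    {y | ∃ g : Mˣ, y = g * x} = MulAction.orbit Mˣ x := by
  ext y
  simp [MulAction.mem_orbit_iff, Units.smul_def, eq_comm]

theorem orbit_units_of_isUnit {x : M} (hx : IsUnit x) :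
    MulAction.orbit Mˣ x = {y | IsUnit y} := by
  ext y
  refine ⟨?_, fun hy => ⟨hy.unit * hx.unit⁻¹, by simp [Units.smul_def, mul_assoc]⟩⟩
  rintro ⟨g, rfl⟩
  exact g.isUnit.mul hx

theorem MulEquiv.image_orbit_units {N : Type*} [Monoid N] (E : M ≃* N) (x : M) :
    E '' MulAction.orbit Mˣ x = MulAction.orbit Nˣ (E x) := by
  ext y
  constructor
  · rintro ⟨_, ⟨g, rfl⟩, rfl⟩
    exact ⟨Units.map E g, by simp [Units.smul_def]⟩
  · rintro ⟨g, rfl⟩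
    exact ⟨Units.map E.symm g • x, ⟨_, rfl⟩, by simp [Units.smul_def]⟩

variable (M) in
theorem card_setOf_isUnit : Nat.card {x : M | IsUnit x} = Nat.card Mˣ :=
  Nat.card_congr Submonoid.unitsTypeEquivIsUnitSubmonoid.toEquiv.symm

end UnitOrbits

def unitOrbitsOfAddOrder (R : Type*) [Ring R] (m : ℕ) : Set (Set R) :=
  {O | ∃ x : R, addOrderOf x = m ∧ O = MulAction.orbit Rˣ x}

theorem RingEquiv.image_unitOrbitsOfAddOrder {R S : Type*} [Ring R] [Ring S] (E : R ≃+* S)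
    (m : ℕ) : Set.image E '' unitOrbitsOfAddOrder R m = unitOrbitsOfAddOrder S m := by
  ext O
  constructor
  · rintro ⟨_, ⟨x, hx, rfl⟩, rfl⟩
    exact ⟨E x, (E.toAddEquiv.addOrderOf_eq x).trans hx, E.toMulEquiv.image_orbit_units x⟩
  · rintro ⟨y, hy, rfl⟩
    refine ⟨_, ⟨E.symm y, (E.symm.toAddEquiv.addOrderOf_eq y).trans hy, rfl⟩, ?_⟩
    simpa using E.toMulEquiv.image_orbit_units (E.symm y)

section Counting

variable {α β ι : Type*}

theorem card_setOf_mem_image_image {e : α → β} (he : e.Injective) (𝒮 : Set (Set α)) (k : ℕ) :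
    Nat.card {O | O ∈ Set.image e '' 𝒮 ∧ Nat.card O = k} =
      Nat.card {O | O ∈ 𝒮 ∧ Nat.card O = k} := by
  have : {O | O ∈ Set.image e '' 𝒮 ∧ Nat.card O = k} =
      Set.image e '' {O | O ∈ 𝒮 ∧ Nat.card O = k} := by
    ext O
    constructor
    · rintro ⟨⟨O, hO, rfl⟩, hk⟩
      exact ⟨O, ⟨hO, by rwa [Nat.card_image_of_injective he] at hk⟩, rfl⟩
    · rintro ⟨O, ⟨hO, hk⟩, rfl⟩
      exact ⟨⟨O, hO, rfl⟩, by rwa [Nat.card_image_of_injective he]⟩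
  rw [this, Nat.card_image_of_injective (Set.image_injective.2 he)]

theorem card_insert_range_and_card_setOf_card_eq [Finite ι] {U : Set α} {F : ι → Set α}
    (hF : F.Injective) {m n : ℕ} (hU : Nat.card U = m) (hFn : ∀ i, Nat.card (F i) = n)
    (hmn : m ≠ n) :
    Nat.card ↥(insert U (Set.range F)) = Nat.card ι + 1 ∧
    Nat.card {O | O ∈ insert U (Set.range F) ∧ Nat.card O = m} = 1 ∧
    Nat.card {O | O ∈ insert U (Set.range F) ∧ Nat.card O = n} = Nat.card ι := by
  have hUF : U ∉ Set.range F := by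
    rintro ⟨i, rfl⟩
    exact hmn (hU ▸ hFn i)
  have hm : {O | O ∈ insert U (Set.range F) ∧ Nat.card O = m} = {U} := by
    ext O
    simp only [Set.mem_ofPred_eq, Set.mem_insert_iff, Set.mem_range, Set.mem_singleton_iff]
    constructor
    · rintro ⟨rfl | ⟨i, rfl⟩, h⟩
      · rfl
      · exact (hmn (h.symm.trans (hFn i))).elim
    · rintro rfl
      exact ⟨Or.inl rfl, hU⟩
  have hn : {O | O ∈ insert U (Set.range F) ∧ Nat.card O = n} = Set.range F := by
    ext O
    simp only [Set.mem_ofPred_eq, Set.mem_insert_iff, Set.mem_range]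
    constructor
    · rintro ⟨rfl | h, hO⟩
      · exact absurd (hU ▸ hO) hmn
      · exact h
    · rintro ⟨i, rfl⟩
      exact ⟨Or.inr ⟨i, rfl⟩, hFn i⟩
  refine ⟨?_, ?_, ?_⟩
  · rw [Nat.card_coe_set_eq, Set.ncard_insert_of_notMem hUF (Set.toFinite _),
      ← Nat.card_coe_set_eq, Nat.card_range_of_injective hF]
  · rw [hm, Nat.card_unique]
  · rw [hn, Nat.card_range_of_injective hF]

end Counting

theorem IsNilpotent.isUnit_add_iff {R : Type*} [CommRing R] {r u : R} (hr : IsNilpotent r) :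
    IsUnit (u + r) ↔ IsUnit u :=
  ⟨fun h => by simpa using hr.neg.isUnit_add_left_of_commute h (Commute.all _ _),
    fun h => hr.isUnit_add_left_of_commute h (Commute.all _ _)⟩

namespace ZMod

theorem natCast_mul_self_eq_zero (p : ℕ) : (p : ZMod (p ^ 2)) * p = 0 := by
  rw [← Nat.cast_mul, ← sq, natCast_self]

variable {p : ℕ} [hp : Fact p.Prime]

theorem natCast_ne_zero_of_prime_sq : (p : ZMod (p ^ 2)) ≠ 0 := by
  rw [Ne, natCast_eq_zero_iff]
  intro h
  have := Nat.le_of_dvd hp.out.pos h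
  nlinarith [hp.out.two_le]

theorem natCast_dvd_of_not_isUnit {s : ZMod (p ^ 2)} (hs : ¬IsUnit s) :
    (p : ZMod (p ^ 2)) ∣ s := by
  rw [← natCast_zmod_val s, isUnit_iff_coprime, Nat.coprime_pow_right_iff two_pos,
    Nat.coprime_comm, hp.out.coprime_iff_not_dvd, not_not] at hs
  rw [← natCast_zmod_val s]
  exact Nat.cast_dvd_cast hs

theorem mul_eq_zero_of_not_isUnit {s t : ZMod (p ^ 2)} (hs : ¬IsUnit s) (ht : ¬IsUnit t) :
    s * t = 0 := by
  obtain ⟨s, rfl⟩ := natCast_dvd_of_not_isUnit hs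
  obtain ⟨t, rfl⟩ := natCast_dvd_of_not_isUnit ht
  linear_combination (s * t) * natCast_mul_self_eq_zero p

theorem natCast_mul_eq_zero_iff_not_isUnit {s : ZMod (p ^ 2)} :
    (p : ZMod (p ^ 2)) * s = 0 ↔ ¬IsUnit s := by
  refine ⟨fun h hs => natCast_ne_zero_of_prime_sq (hs.mul_left_eq_zero.1 h), fun hs => ?_⟩
  obtain ⟨t, rfl⟩ := natCast_dvd_of_not_isUnit hs
  linear_combination t * natCast_mul_self_eq_zero p

theorem card_isUnit_prime_sq : Nat.card {s : ZMod (p ^ 2) | IsUnit s} = p * (p - 1) := by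
  rw [card_setOf_isUnit, Nat.card_eq_fintype_card, card_units_eq_totient,
    Nat.totient_prime_pow hp.out two_pos]
  norm_num

theorem card_not_isUnit_prime_sq : Nat.card {s : ZMod (p ^ 2) | ¬IsUnit s} = p := by
  have h := Set.ncard_add_ncard_compl {s : ZMod (p ^ 2) | IsUnit s}
  rw [← Nat.card_coe_set_eq, ← Nat.card_coe_set_eq, card_isUnit_prime_sq, Nat.card_zmod] at h
  obtain ⟨q, rfl⟩ : ∃ q, p = q + 1 := ⟨p - 1, (Nat.sub_add_cancel hp.out.one_le).symm⟩
  simp only [add_tsub_cancel_right] at h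
  exact Nat.add_left_cancel (h.trans (by ring))

end ZMod

namespace QuadraticAlgebra

variable {R : Type*} [CommRing R]

theorem isUnit_iff_isUnit_re {a b : R} (ha : IsNilpotent a) (hb : IsNilpotent b)
    {x : QuadraticAlgebra R a b} : IsUnit x ↔ IsUnit x.re := by
  have hnil : IsNilpotent (b * x.re * x.im - a * x.im * x.im) :=
    (Commute.all _ _).isNilpotent_sub (Commute.all _ _ |>.isNilpotent_mul_right
      (Commute.all _ _ |>.isNilpotent_mul_right hb)) (Commute.all _ _ |>.isNilpotent_mul_right
      (Commute.all _ _ |>.isNilpotent_mul_right ha))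
  rw [isUnit_iff_norm_isUnit, norm_def, add_sub_assoc, hnil.isUnit_add_iff, isUnit_mul_self_iff]

variable {b : R}

theorem orbit_mk_one (hR : ∀ s t : R, ¬IsUnit s → ¬IsUnit t → s * t = 0) (hb : ¬IsUnit b)
    {s : R} (hs : ¬IsUnit s) :
    MulAction.orbit (QuadraticAlgebra R 0 b)ˣ (⟨s, 1⟩ : QuadraticAlgebra R 0 b) =
      {y : QuadraticAlgebra R 0 b | IsUnit y.im ∧ y.re = s * y.im} := by
  have hsb : s * s = 0 ∧ s * b = 0 ∧ b * b = 0 := ⟨hR _ _ hs hs, hR _ _ hs hb, hR _ _ hb hb⟩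
  ext y
  constructor
  · rintro ⟨g, rfl⟩
    set x : QuadraticAlgebra R 0 b := ↑g
    have hx : IsUnit x.re :=
      (isUnit_iff_isUnit_re IsNilpotent.zero ⟨2, by rw [sq, hsb.2.2]⟩).1 g.isUnit
    have hnil : IsNilpotent (x.im * (s + b)) :=
      ⟨2, by linear_combination x.im ^ 2 * (hsb.1 + 2 * hsb.2.1 + hsb.2.2)⟩
    have him : (x * ⟨s, 1⟩).im = x.re + x.im * (s + b) := by simp; ring
    change x * ⟨s, 1⟩ ∈ _
    refine ⟨him ▸ hnil.isUnit_add_iff.2 hx, ?_⟩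
    rw [him, re_mul]
    linear_combination (-x.im) * (hsb.1 + hsb.2.1)
  · rintro ⟨hy, hys⟩
    refine ⟨hy.unit.map (algebraMap R (QuadraticAlgebra R 0 b)).toMonoidHom, ?_⟩
    ext <;> simp [Units.smul_def, hys, mul_comm]

theorem orbit_mk_one_injective (hR : ∀ s t : R, ¬IsUnit s → ¬IsUnit t → s * t = 0)
    (hb : ¬IsUnit b) : Function.Injective fun s : {s : R | ¬IsUnit s} =>
      MulAction.orbit (QuadraticAlgebra R 0 b)ˣ (⟨s, 1⟩ : QuadraticAlgebra R 0 b) := by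
  rintro ⟨s, hs⟩ ⟨t, ht⟩ h
  have hst : (⟨s, 1⟩ : QuadraticAlgebra R 0 b) ∈
      MulAction.orbit (QuadraticAlgebra R 0 b)ˣ (⟨t, 1⟩ : QuadraticAlgebra R 0 b) := by
    simp only at h
    exact h ▸ MulAction.mem_orbit_self _
  rw [orbit_mk_one hR hb ht] at hst
  simpa using hst.2

theorem card_orbit_mk_one (hR : ∀ s t : R, ¬IsUnit s → ¬IsUnit t → s * t = 0)
    (hb : ¬IsUnit b) {s : R} (hs : ¬IsUnit s) :
    Nat.card (MulAction.orbit (QuadraticAlgebra R 0 b)ˣ (⟨s, 1⟩ : QuadraticAlgebra R 0 b)) =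
      Nat.card {r : R | IsUnit r} := by
  rw [orbit_mk_one hR hb hs]
  exact Nat.card_congr
    { toFun y := ⟨y.1.im, y.2.1⟩
      invFun r := ⟨⟨s * r, r⟩, r.2, rfl⟩
      left_inv := fun ⟨y, _, hy⟩ => by ext <;> simp [hy]
      right_inv _ := rfl }

theorem card_setOf_isUnit_of_isNilpotent {a b : R} (ha : IsNilpotent a) (hb : IsNilpotent b) :
    Nat.card {y : QuadraticAlgebra R a b | IsUnit y} =
      Nat.card {r : R | IsUnit r} * Nat.card R := by
  rw [← Nat.card_prod]
  exact Nat.card_congr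
    { toFun y := (⟨y.1.re, (isUnit_iff_isUnit_re ha hb).1 y.2⟩, y.1.im)
      invFun r := ⟨⟨r.1, r.2⟩, (isUnit_iff_isUnit_re ha hb).2 r.1.2⟩
      left_inv _ := rfl
      right_inv _ := rfl }

theorem setOf_orbit_eq_insert_range (hR : ∀ s t : R, ¬IsUnit s → ¬IsUnit t → s * t = 0)
    (hb : ¬IsUnit b) :
    {O | ∃ x : QuadraticAlgebra R 0 b, (IsUnit x.re ∨ IsUnit x.im) ∧
        O = MulAction.orbit (QuadraticAlgebra R 0 b)ˣ x} =
      insert {y | IsUnit y} (Set.range fun s : {s : R | ¬IsUnit s} =>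
        MulAction.orbit (QuadraticAlgebra R 0 b)ˣ (⟨s, 1⟩ : QuadraticAlgebra R 0 b)) := by
  have hbb : IsNilpotent b := ⟨2, (sq b).trans (hR b b hb hb)⟩
  ext O
  constructor
  · rintro ⟨x, hx, rfl⟩
    by_cases hre : IsUnit x.re
    · exact Or.inl (orbit_units_of_isUnit ((isUnit_iff_isUnit_re .zero hbb).2 hre))
    · have him := hx.resolve_left hre
      set s := x.re * ↑him.unit⁻¹
      have hsx : x.re = s * x.im := by simp [s, mul_assoc, him.val_inv_mul]
      have hs : ¬IsUnit s := fun h => hre (hsx ▸ h.mul him)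
      refine Or.inr ⟨⟨s, hs⟩, (MulAction.orbit_eq_iff.2 ?_).symm⟩
      rw [orbit_mk_one hR hb hs]
      exact ⟨him, hsx⟩
  · rintro (rfl | ⟨⟨s, hs⟩, rfl⟩)
    · exact ⟨1, Or.inl (by simp), (orbit_units_of_isUnit isUnit_one).symm⟩
    · exact ⟨⟨s, 1⟩, Or.inr isUnit_one, rfl⟩

section PrimeSq

variable {p : ℕ} [hp : Fact p.Prime]

theorem addOrderOf_eq_prime_sq_iff {a b : ZMod (p ^ 2)}
    {x : QuadraticAlgebra (ZMod (p ^ 2)) a b} :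
    addOrderOf x = p ^ 2 ↔ IsUnit x.re ∨ IsUnit x.im := by
  have hsmul (n : ℕ) :
      n • x = 0 ↔ (n : ZMod (p ^ 2)) * x.re = 0 ∧ (n : ZMod (p ^ 2)) * x.im = 0 := by
    simp [QuadraticAlgebra.ext_iff, nsmul_eq_mul]
  constructor
  · intro h
    by_contra! hx
    have hdvd := addOrderOf_dvd_of_nsmul_eq_zero <| (hsmul p).2
      ⟨ZMod.natCast_mul_eq_zero_iff_not_isUnit.2 hx.1,
        ZMod.natCast_mul_eq_zero_iff_not_isUnit.2 hx.2⟩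
    rw [h] at hdvd
    have := Nat.le_of_dvd hp.out.pos hdvd
    nlinarith [hp.out.two_le]
  · intro hx
    refine addOrderOf_eq_prime_pow (n := 1) ?_ ((hsmul _).2 (by simp))
    rw [pow_one, hsmul, ZMod.natCast_mul_eq_zero_iff_not_isUnit,
      ZMod.natCast_mul_eq_zero_iff_not_isUnit]
    tauto

theorem card_unitOrbitsOfAddOrder_prime_sq {b : ZMod (p ^ 2)} (hb : ¬IsUnit b) :
    Nat.card (unitOrbitsOfAddOrder (QuadraticAlgebra (ZMod (p ^ 2)) 0 b) (p ^ 2)) = p + 1 ∧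
    Nat.card {O | O ∈ unitOrbitsOfAddOrder (QuadraticAlgebra (ZMod (p ^ 2)) 0 b) (p ^ 2) ∧
      Nat.card O = p ^ 3 * (p - 1)} = 1 ∧
    Nat.card {O | O ∈ unitOrbitsOfAddOrder (QuadraticAlgebra (ZMod (p ^ 2)) 0 b) (p ^ 2) ∧
      Nat.card O = p * (p - 1)} = p := by
  have hR : ∀ s t : ZMod (p ^ 2), ¬IsUnit s → ¬IsUnit t → s * t = 0 :=
    fun _ _ => ZMod.mul_eq_zero_of_not_isUnit
  have horbits : unitOrbitsOfAddOrder (QuadraticAlgebra (ZMod (p ^ 2)) 0 b) (p ^ 2) =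
      {O | ∃ x : QuadraticAlgebra (ZMod (p ^ 2)) 0 b, (IsUnit x.re ∨ IsUnit x.im) ∧
        O = MulAction.orbit (QuadraticAlgebra (ZMod (p ^ 2)) 0 b)ˣ x} := by
    simp only [unitOrbitsOfAddOrder, addOrderOf_eq_prime_sq_iff]
  have hunits :
      Nat.card {y : QuadraticAlgebra (ZMod (p ^ 2)) 0 b | IsUnit y} = p ^ 3 * (p - 1) := by
    rw [card_setOf_isUnit_of_isNilpotent .zero ⟨2, (sq b).trans (hR b b hb hb)⟩,
      ZMod.card_isUnit_prime_sq, Nat.card_zmod]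
    ring
  have hne : p ^ 3 * (p - 1) ≠ p * (p - 1) := by
    have hp3 : p ^ 1 < p ^ 3 := Nat.pow_lt_pow_right hp.out.one_lt (by norm_num)
    intro h
    rw [Nat.eq_of_mul_eq_mul_right (Nat.sub_pos_of_lt hp.out.one_lt) h, pow_one] at hp3
    exact lt_irrefl p hp3
  rw [horbits, setOf_orbit_eq_insert_range hR hb]
  simpa only [ZMod.card_not_isUnit_prime_sq] using
    card_insert_range_and_card_setOf_card_eq (orbit_mk_one_injective hR hb) hunits
      (fun s => (card_orbit_mk_one hR hb s.2).trans ZMod.card_isUnit_prime_sq) hne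

end PrimeSq

theorem nonempty_quotient_natCast_ringEquiv {a b : ℤ} {n : ℕ} {a' b' : ZMod n}
    (ha : (a : ZMod n) = a') (hb : (b : ZMod n) = b') :
    Nonempty ((QuadraticAlgebra ℤ a b ⧸ Ideal.span {(n : QuadraticAlgebra ℤ a b)}) ≃+*
      QuadraticAlgebra (ZMod n) a' b') := by
  have hω : (⟨0, 1⟩ : QuadraticAlgebra (ZMod n) a' b') * ⟨0, 1⟩ = a • 1 + b • ⟨0, 1⟩ := by
    ext <;> simp [ha, hb]
  let φ := QuadraticAlgebra.lift ⟨_, hω⟩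
  have hφ (z : QuadraticAlgebra ℤ a b) : φ z = ⟨z.re, z.im⟩ := by
    ext <;> simp [φ]
  have hsurj : Function.Surjective φ := fun y => ⟨⟨y.re.cast, y.im.cast⟩, by simp [hφ]⟩
  have hker : RingHom.ker φ = Ideal.span {(n : QuadraticAlgebra ℤ a b)} := by
    ext z
    rw [RingHom.mem_ker, Ideal.mem_span_singleton, ← map_natCast (algebraMap ℤ _),
      QuadraticAlgebra.algebraMap_dvd_iff, hφ]
    simp [QuadraticAlgebra.ext_iff, ZMod.intCast_zmod_eq_zero_iff_dvd]
  exact ⟨(Ideal.quotEquivOfEq hker.symm).trans (RingHom.quotientKerEquivOfSurjective hsurj)⟩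

end QuadraticAlgebra

namespace NumberField.RingOfIntegers

variable {K : Type*} [Field K] [NumberField K]

instance isTorsionFree_quotient_span_one : IsTorsionFree ℤ (𝓞 K ⧸ (ℤ ∙ (1 : 𝓞 K))) := by
  refine .of_smul_eq_zero fun n x hx => or_iff_not_imp_left.2 fun hn => ?_
  obtain ⟨x, rfl⟩ := Submodule.Quotient.mk_surjective _ x
  rw [← Submodule.Quotient.mk_smul, Submodule.Quotient.mk_eq_zero,
    Submodule.mem_span_singleton] at hx
  obtain ⟨m, hm⟩ := hx
  have hxq : (x : K) = ((m / n : ℚ) : K) := by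
    have := congrArg ((↑) : 𝓞 K → K) hm
    push_cast at this ⊢
    rw [eq_div_iff (by exact_mod_cast hn)]
    linear_combination -this
  obtain ⟨k, hk⟩ := (IsIntegral.exists_int_iff_exists_rat x.isIntegral_coe).1 ⟨_, hxq⟩
  rw [Submodule.Quotient.mk_eq_zero, Submodule.mem_span_singleton]
  exact ⟨k, RingOfIntegers.ext (by simp [hk])⟩

theorem exists_linearIndependent_one_of_finrank_eq_two (h : finrank ℚ K = 2) :
    ∃ ω : 𝓞 K, LinearIndependent ℤ ![1, ω] ∧ ∀ x : 𝓞 K, ∃ a b : ℤ, x = a + b * ω := by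
  set N : Submodule ℤ (𝓞 K) := ℤ ∙ 1
  have hN : finrank ℤ N = 1 := by
    have := finrank_span_eq_card (R := ℤ) (b := fun _ : Fin 1 => (1 : 𝓞 K))
      (linearIndependent_unique_iff.2 one_ne_zero)
    rwa [Set.range_const, Fintype.card_fin] at this
  have hQ : finrank ℤ (𝓞 K ⧸ N) = 1 := by
    have := N.finrank_quotient_add_finrank
    rw [RingOfIntegers.rank, h, hN] at this
    omega
  let B := Module.finBasisOfFinrankEq ℤ _ hQ
  obtain ⟨ω, hω⟩ := Submodule.Quotient.mk_surjective N (B 0)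
  have h1 : Submodule.Quotient.mk (p := N) 1 = 0 :=
    (Submodule.Quotient.mk_eq_zero N).2 (Submodule.mem_span_singleton_self 1)
  refine ⟨ω, LinearIndependent.pair_iff.2 fun s t hst => ?_, fun x => ?_⟩
  · have ht : t • B 0 = 0 := by
      have := congrArg (Submodule.Quotient.mk (p := N)) hst
      rwa [Submodule.Quotient.mk_add, Submodule.Quotient.mk_smul, Submodule.Quotient.mk_smul, h1,
        hω, smul_zero, zero_add, Submodule.Quotient.mk_zero] at this
    obtain rfl : t = 0 := (smul_eq_zero.1 ht).resolve_right (B.ne_zero 0)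
    simpa using hst
  · obtain ⟨a, ha⟩ : ∃ a : ℤ, a • 1 = x - B.repr (Submodule.Quotient.mk x) 0 • ω := by
      rw [← Submodule.mem_span_singleton, ← Submodule.Quotient.mk_eq_zero,
        Submodule.Quotient.mk_sub, Submodule.Quotient.mk_smul, hω, sub_eq_zero]
      simpa using (B.sum_repr (Submodule.Quotient.mk x)).symm
    refine ⟨a, B.repr (Submodule.Quotient.mk x) 0, ?_⟩
    rw [← zsmul_eq_mul, ← zsmul_one, ha, sub_add_cancel]

end NumberField.RingOfIntegers

section CondOrder

variable {K : Type*} [Field K] [NumberField K]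

theorem exists_quadraticAlgebra_ringEquiv_condOrder (h : finrank ℚ K = 2) {f : ℕ} (hf : f ≠ 0) :
    ∃ a b : ℤ, Nonempty (QuadraticAlgebra ℤ (f ^ 2 * a) (f * b) ≃+* condOrder K f) := by
  obtain ⟨ω, hli, hspan⟩ := RingOfIntegers.exists_linearIndependent_one_of_finrank_eq_two h
  obtain ⟨a, b, hab⟩ := hspan (ω * ω)
  have hτ : (f * ω : K) * (f * ω) = (f ^ 2 * a : ℤ) • 1 + (f * b : ℤ) • (f * ω : K) := by
    have := congrArg (algebraMap (𝓞 K) K) hab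
    simp only [map_add, map_mul, map_intCast] at this
    simp only [zsmul_eq_mul]
    push_cast
    linear_combination (f : K) ^ 2 * this
  let φ := QuadraticAlgebra.lift ⟨_, hτ⟩
  have hφ (z : QuadraticAlgebra ℤ (f ^ 2 * a) (f * b)) : φ z = z.re + z.im * (f * ω : K) := by
    simp [φ, zsmul_eq_mul]
  have hinj : Function.Injective φ := by
    refine (injective_iff_map_eq_zero φ).2 fun z hz => ?_
    rw [hφ] at hz
    have := LinearIndependent.pair_iff.1 hli z.re (z.im * f) (RingOfIntegers.coe_injective (by
      simp only [zsmul_eq_mul, map_add, map_mul, map_intCast, map_one, map_zero]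
      push_cast
      linear_combination hz))
    ext
    · exact this.1
    · simpa [hf] using this.2
  have hrange : φ.range.toSubring = condOrder K f := by
    refine le_antisymm ?_ (Subring.closure_le.2 ?_)
    · rintro _ ⟨z, rfl⟩
      change φ z ∈ _
      rw [hφ]
      exact add_mem (intCast_mem _ _) (mul_mem (intCast_mem _ _)
        (Subring.subset_closure ⟨ω, ω.2, rfl⟩))
    · rintro _ ⟨y, hy, rfl⟩
      obtain ⟨m, n, hmn⟩ := hspan ⟨y, hy⟩
      refine ⟨⟨f * m, n⟩, ?_⟩
      have := congrArg (algebraMap (𝓞 K) K) hmn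
      simp only [map_add, map_mul, map_intCast, RingOfIntegers.map_mk] at this
      change φ _ = _
      rw [this, hφ, RingOfIntegers.coe_eq_algebraMap]
      push_cast
      ring
  exact ⟨a, b, ⟨(AlgEquiv.ofInjective φ hinj).toRingEquiv.trans
    (RingEquiv.subringCongr hrange)⟩⟩

theorem exists_quotient_condOrder_ringEquiv_quadraticAlgebra (h : finrank ℚ K = 2) {f ℓ : ℕ}
    [Fact ℓ.Prime] (hf : f ≠ 0) (hdvd : ℓ ∣ f) :
    ∃ b : ZMod (ℓ ^ 2), ¬IsUnit b ∧ Nonempty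
      (condOrder K f ⧸ Ideal.span {(ℓ : condOrder K f) ^ 2} ≃+*
        QuadraticAlgebra (ZMod (ℓ ^ 2)) 0 b) := by
  obtain ⟨a, c, ⟨e⟩⟩ := exists_quadraticAlgebra_ringEquiv_condOrder h hf
  obtain ⟨g, rfl⟩ := hdvd
  have hℓ : (ℓ : ZMod (ℓ ^ 2)) ^ 2 = 0 := by exact_mod_cast ZMod.natCast_self (ℓ ^ 2)
  obtain ⟨e'⟩ := QuadraticAlgebra.nonempty_quotient_natCast_ringEquiv (n := ℓ ^ 2) (a' := 0)
    (a := ((ℓ * g : ℕ) : ℤ) ^ 2 * a) (b := (ℓ * g : ℕ) * c)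
    (b' := ((ℓ * g * c : ℤ) : ZMod (ℓ ^ 2)))
    (by push_cast; linear_combination (g ^ 2 * a : ZMod (ℓ ^ 2)) * hℓ) (by push_cast; rfl)
  refine ⟨((ℓ * g * c : ℤ) : ZMod (ℓ ^ 2)), ZMod.natCast_mul_eq_zero_iff_not_isUnit.1 ?_, ⟨?_⟩⟩
  · push_cast
    linear_combination (g * c : ZMod (ℓ ^ 2)) * hℓ
  refine (Ideal.quotientEquiv _ _ e.symm ?_).trans e'
  rw [Ideal.map_span, Set.image_singleton, map_pow, map_natCast, Nat.cast_pow]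

end CondOrder

theorem cartan_orbits_ell_sq_general
    (K : Type*) [Field K] [Algebra ℚ K]
    (hdim : Module.finrank ℚ K = 2)
    (f ℓ : ℕ) (hf : 0 < f) (hℓ : ℓ.Prime) (hdvd : ℓ ∣ f) :
    let R := (condOrder K f) ⧸ (Ideal.span {((ℓ : condOrder K f)) ^ 2})
    let orbs : Set (Set R) :=
      {s | ∃ x : R, addOrderOf x = ℓ ^ 2 ∧ s = {y | ∃ g : Rˣ, y = (g : R) * x}}
    Nat.card orbs = ℓ + 1 ∧
    Nat.card {s : Set R | s ∈ orbs ∧ Nat.card s = ℓ ^ 3 * (ℓ - 1)} = 1 ∧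
    Nat.card {s : Set R | s ∈ orbs ∧ Nat.card s = ℓ * (ℓ - 1)} = ℓ := by
  intro R orbs
  have : Fact ℓ.Prime := ⟨hℓ⟩
  have : CharZero K := charZero_of_injective_algebraMap (algebraMap ℚ K).injective
  obtain rfl : ‹Algebra ℚ K› = DivisionRing.toRatAlgebra := Subsingleton.elim _ _
  have : NumberField K := { to_finiteDimensional := Module.finite_of_finrank_eq_succ hdim }
  obtain ⟨b, hb, ⟨E⟩⟩ := exists_quotient_condOrder_ringEquiv_quadraticAlgebra hdim hf.ne' hdvd
  have horbs : orbs = Set.image E.symm '' unitOrbitsOfAddOrder _ (ℓ ^ 2) := by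
    rw [E.symm.image_unitOrbitsOfAddOrder]
    simp only [orbs, unitOrbitsOfAddOrder, setOf_exists_units_mul_eq_orbit]
    rfl
  have hinj := E.symm.injective
  rw [horbs, Nat.card_image_of_injective (Set.image_injective.2 hinj),
    card_setOf_mem_image_image hinj, card_setOf_mem_image_image hinj]
  exact QuadraticAlgebra.card_unitOrbitsOfAddOrder_prime_sq hb

/-- Let `𝒪 = ℤ + f𝒪_K` be the order of conductor `f` in an imaginary
quadratic field `K` and `ℓ` a prime dividing `f`.  Then `(𝒪/ℓ²𝒪)ˣ` acting on the elements of
`𝒪/ℓ²𝒪` of additive order `ℓ²` has exactly `ℓ + 1` orbits: one of size `ℓ³(ℓ − 1)` and `ℓ`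
of size `ℓ(ℓ − 1)`. -/
theorem cartan_orbits_ell_sq
    (K : Type*) [Field K] [Algebra ℚ K]
    (hdim : Module.finrank ℚ K = 2) (himag : IsEmpty (K →+* ℝ))
    (f ℓ : ℕ) (hf : 0 < f) (hℓ : ℓ.Prime) (hdvd : ℓ ∣ f) :
    let R := (condOrder K f) ⧸ (Ideal.span {((ℓ : condOrder K f)) ^ 2})
    let orbs : Set (Set R) :=
      {s | ∃ x : R, addOrderOf x = ℓ ^ 2 ∧ s = {y | ∃ g : Rˣ, y = (g : R) * x}}
    Nat.card orbs = ℓ + 1 ∧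
    Nat.card {s : Set R | s ∈ orbs ∧ Nat.card s = ℓ ^ 3 * (ℓ - 1)} = 1 ∧
    Nat.card {s : Set R | s ∈ orbs ∧ Nat.card s = ℓ * (ℓ - 1)} = ℓ :=
  cartan_orbits_ell_sq_general K hdim f ℓ hf hℓ hdvd
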